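/- arXiv:0807.4383 — 2 statements merged into one kernel-verified Lean document; each statement's English description precedes it below -/
import Mathlib

section
/- (Weak self-duality) Let E₁ and E₂ be real vector spaces, Φ : E₁ × E₂ → ℝ a bilinear form, C₁ ⊆ E₁ a set (the cone of effects of system 1), Σ₂ a set of linear functionals on E₂ (the cone of states of system 2), and Λ₁ a set of linear functionals on E₁ (the states of system 1). Assume: (i) Φ(a,·) ∈ Σ₂ for every a ∈ C₁; (ii) Φ is preparationally faithful with respect to system 1: for every σ ∈ Σ₂ there exists a ∈ C₁ with Φ(a,·) = σ; (iii) Φ is preparationally faithful with respect to system 2: for every λ ∈ Λ₁ there exists y ∈ E₂ with λ(a) = Φ(a,y) for all a ∈ E₁; (iv) Λ₁ separates E₁: if λ(a) = λ(a') for all λ ∈ Λ₁ then a = a'. Then the map a ↦ Φ(a,·) is injective on E₁ and restricts to a bijection from C₁ onto Σ₂, establishing the cone-isomorphism between the cone of effects of system 1 and the cone of states of system 2. -/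
theorem LinearMap.injective_of_separating_of_forall_exists_eq_flip
    {R M N P : Type*} [CommSemiring R] [AddCommMonoid M] [Module R M]
    [AddCommMonoid N] [Module R N] [AddCommMonoid P] [Module R P]
    (Φ : M →ₗ[R] N →ₗ[R] P) (Λ : Set (M →ₗ[R] P))
    (hrep : ∀ f ∈ Λ, ∃ y : N, ∀ a : M, f a = Φ a y)
    (hsep : ∀ a a' : M, (∀ f ∈ Λ, f a = f a') → a = a') :
    Function.Injective Φ := by
  intro a a' h
  refine hsep a a' fun f hf => ?_
  obtain ⟨y, hy⟩ := hrep f hf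
  rw [hy, hy, h]

/-- Weak self-duality: a state that is preparationally faithful with respect to
both systems induces, via `a ↦ Φ(a,·)`, an injective map on effects restricting
to a bijection from the cone of effects of system 1 onto the cone of states of
system 2. -/
theorem weak_self_duality
    {E₁ E₂ : Type*} [AddCommGroup E₁] [Module ℝ E₁] [AddCommGroup E₂] [Module ℝ E₂]
    (Φ : E₁ →ₗ[ℝ] E₂ →ₗ[ℝ] ℝ)
    (C₁ : Set E₁)
    (Sig₂ : Set (E₂ →ₗ[ℝ] ℝ))
    (Lam₁ : Set (E₁ →ₗ[ℝ] ℝ))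
    (hmap : ∀ a ∈ C₁, (Φ a : E₂ →ₗ[ℝ] ℝ) ∈ Sig₂)
    (hprep1 : ∀ σ ∈ Sig₂, ∃ a ∈ C₁, (Φ a : E₂ →ₗ[ℝ] ℝ) = σ)
    (hprep2 : ∀ lam ∈ Lam₁, ∃ y : E₂, ∀ a : E₁, lam a = Φ a y)
    (hsep : ∀ a a' : E₁, (∀ lam ∈ Lam₁, lam a = lam a') → a = a') :
    Function.Injective (fun a : E₁ => (Φ a : E₂ →ₗ[ℝ] ℝ)) ∧
    Set.BijOn (fun a : E₁ => (Φ a : E₂ →ₗ[ℝ] ℝ)) C₁ Sig₂ := by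
  have hinj := Φ.injective_of_separating_of_forall_exists_eq_flip Lam₁ hprep2 hsep
  exact ⟨hinj, hmap, hinj.injOn, hprep1⟩
end

section
/- Let E be a finite-dimensional real vector space, V a real vector space, ι : E ⊗ E → V an injective linear map (the embedding of products of local effects into bipartite effects), T a linear subspace of End(E) (the real span of the transformations, acting linearly on effects), and f : T → V a surjective linear map (the map A ↦ (A,I)Φ induced by a preparationally faithful state, composed with the identification of bipartite states with bipartite effects). Then: f is injective, hence a linear isomorphism; T = End(E), i.e., the linear space of transformations is full; ι is surjective, i.e., the space of bipartite effects coincides with the tensor product E ⊗ E; and dim V = (dim E)². -/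
open Module TensorProduct

/-!
Dimension count: `f` surjective and `ι` injective give
`dim V ≤ dim T ≤ dim End(E) = (dim E)² = dim (E ⊗ E) ≤ dim V`, so every inequality is an
equality, and a linear map between spaces of equal finite dimension is injective iff surjective.
-/

theorem LinearMap.finrank_eq_of_surjective_of_injective_of_le {K M N P : Type*} [DivisionRing K]
    [AddCommGroup M] [Module K M] [AddCommGroup N] [Module K N] [AddCommGroup P] [Module K P]
    [FiniteDimensional K M] [FiniteDimensional K P]
    {f : M →ₗ[K] N} (hf : Function.Surjective f) {g : P →ₗ[K] N} (hg : Function.Injective g)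
    (h : finrank K M ≤ finrank K P) :
    finrank K N = finrank K M ∧ finrank K N = finrank K P := by
  have : FiniteDimensional K N := Module.Finite.of_surjective f hf
  have hNM : finrank K N ≤ finrank K M := LinearMap.finrank_le_finrank_of_surjective hf
  have hPN : finrank K P ≤ finrank K N := LinearMap.finrank_le_finrank_of_injective hg
  omega

theorem Submodule.finrank_le_finrank_tensorProduct_self {K E : Type*} [Field K]
    [AddCommGroup E] [Module K E] [FiniteDimensional K E] (T : Submodule K (E →ₗ[K] E)) :
    finrank K T ≤ finrank K (E ⊗[K] E) := by
  rw [finrank_tensorProduct, ← finrank_linearMap]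
  exact T.finrank_le

/-- Tensor-product structure and local observability: if products of local
effects embed injectively into the bipartite effect space `V` and a
preparationally faithful state induces a surjective linear map from the span
`T` of transformations onto `V`, then that map is an isomorphism, the span of
transformations is full (`T = End(E)`), the bipartite effect space coincides
with the tensor product `E ⊗ E`, and `dim V = (dim E)²`. -/
theorem tensor_product_structure_of_bipartite_effects
    {E V : Type*} [AddCommGroup E] [Module ℝ E] [FiniteDimensional ℝ E]
    [AddCommGroup V] [Module ℝ V]
    (ι : E ⊗[ℝ] E →ₗ[ℝ] V) (hι : Function.Injective ι)
    (T : Submodule ℝ (E →ₗ[ℝ] E))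
    (f : T →ₗ[ℝ] V) (hf : Function.Surjective f) :
    Function.Injective f ∧
    T = ⊤ ∧
    Function.Surjective ι ∧
    Module.finrank ℝ V = (Module.finrank ℝ E) ^ 2 := by
  have : FiniteDimensional ℝ V := Module.Finite.of_surjective f hf
  obtain ⟨hVT, hVE⟩ := LinearMap.finrank_eq_of_surjective_of_injective_of_le hf hι
    T.finrank_le_finrank_tensorProduct_self
  refine ⟨(LinearMap.injective_iff_surjective_of_finrank_eq_finrank hVT.symm).mpr hf, ?_,
    (LinearMap.injective_iff_surjective_of_finrank_eq_finrank hVE.symm).mp hι, ?_⟩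
  · apply Submodule.eq_top_of_finrank_eq
    rw [← hVT, hVE, finrank_tensorProduct, finrank_linearMap]
  · rw [hVE, finrank_tensorProduct, sq]
end
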